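/- arXiv:2208.04175 — 2 statements merged into one kernel-verified Lean document; each statement's English description precedes it below -/
import Mathlib

section
/- For every partition λ contained in the m×m box, the multiset of entries of the area sequence a(λ) equals the multiset of entries of the area sequence a(λ^t), where λ^t is the conjugate partition (also contained in the m×m box). -/
noncomputable section

/-- The base field `F = ℂ(q)`. -/
abbrev F : Type := RatFunc ℂ

/-- The indeterminate `q`. -/
def qq : F := RatFunc.X

/-- The `q`-integer `[j]_q = 1 + q + ⋯ + q^(j-1)`. -/
def qint (j : ℕ) : F := ∑ i ∈ Finset.range j, qq ^ i

/-- The `q`-factorial `[j]_q! = [1]_q ⋯ [j]_q`. -/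
def qfact (j : ℕ) : F := ∏ i ∈ Finset.range j, qint (i + 1)

/-- Modular relations defining the path algebra `𝒫`; the letter `true` is `𝗇`,
the letter `false` is `𝖾`. -/
inductive PathRel : FreeAlgebra F Bool → FreeAlgebra F Bool → Prop where
  | mod1 : PathRel
      ((1 + qq) • (FreeAlgebra.ι F false * FreeAlgebra.ι F true * FreeAlgebra.ι F false))
      (qq • (FreeAlgebra.ι F false * FreeAlgebra.ι F false * FreeAlgebra.ι F true) +
        FreeAlgebra.ι F true * FreeAlgebra.ι F false * FreeAlgebra.ι F false)
  | mod2 : PathRel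
      ((1 + qq) • (FreeAlgebra.ι F true * FreeAlgebra.ι F false * FreeAlgebra.ι F true))
      (qq • (FreeAlgebra.ι F false * FreeAlgebra.ι F true * FreeAlgebra.ι F true) +
        FreeAlgebra.ι F true * FreeAlgebra.ι F true * FreeAlgebra.ι F false)

/-- The path algebra `𝒫`. -/
abbrev PathAlg : Type := RingQuot PathRel

/-- The generator `𝗇` of `𝒫`. -/
def Pn : PathAlg := RingQuot.mkAlgHom F PathRel (FreeAlgebra.ι F true)

/-- The generator `𝖾` of `𝒫`. -/
def Pe : PathAlg := RingQuot.mkAlgHom F PathRel (FreeAlgebra.ι F false)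

/-- The element of `𝒫` determined by a word in `𝗇` (`true`) and `𝖾` (`false`). -/
def wordElem (w : List Bool) : PathAlg := (w.map fun b => if b then Pn else Pe).prod

/-- `𝒫_{m,n}`: the span of words with `m` letters `𝗇` and `n` letters `𝖾`. -/
def Pmn (m n : ℕ) : Submodule F PathAlg :=
  Submodule.span F {x | ∃ w : List Bool, w.count true = m ∧ w.count false = n ∧ x = wordElem w}

/-- `lam` (0-indexed list of parts) is a partition contained in the `m × n` box. -/
def IsPartitionIn (m n : ℕ) (lam : ℕ → ℕ) : Prop :=
  (∀ i j, i ≤ j → lam j ≤ lam i) ∧ (∀ i, lam i ≤ n) ∧ (∀ i, m ≤ i → lam i = 0)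

/-- `eastBefore w r` = number of east steps (`false`) preceding the `(r+1)`-st
north step (`true`) of `w`. -/
def eastBefore : List Bool → ℕ → ℕ
  | [], _ => 0
  | true :: _, 0 => 0
  | true :: w, r + 1 => eastBefore w r
  | false :: w, r => eastBefore w r + 1

/-- `northBefore w r` = number of north steps (`true`) preceding the `(r+1)`-st
east step (`false`) of `w`. -/
def northBefore : List Bool → ℕ → ℕ
  | [], _ => 0
  | false :: _, 0 => 0
  | false :: w, r + 1 => northBefore w r
  | true :: w, r => northBefore w r + 1

/-- The partition `λ(w)` of a word with `m` letters `𝗇`, as a 0-indexed function: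
row `i` (from the top) of the partition has `eastBefore w (m-1-i)` cells. -/
def wordLam (m : ℕ) (w : List Bool) : ℕ → ℕ :=
  fun i => if i < m then eastBefore w (m - 1 - i) else 0

/-- The word `w(λ)` of a partition `λ ⊆ m × n` (given as 0-indexed `lam : ℕ → ℕ`). -/
def wordOf (m n : ℕ) (lam : ℕ → ℕ) : List Bool :=
  ((List.range m).flatMap fun k =>
    List.replicate (lam (m - 1 - k) - lam (m - k)) false ++ [true]) ++
    List.replicate (n - lam 0) false

/-- The rook in column `j` of the placement `ρ` lies inside the Ferrers board of `lam`. -/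
def rookInside (m n : ℕ) (lam : ℕ → ℕ) (ρ : Fin n ↪ Fin m) (j : Fin n) : Prop :=
  (j : ℕ) < lam (ρ j)

/-- The cell in row `i` (0-indexed from the top) and column `j` (0-indexed from the left)
is unattacked for the maximal non-attacking rook placement `ρ` (with the Ferrers board of
`lam` drawn in the top-left corner of the `m × n` board). -/
def Unattacked (m n : ℕ) (lam : ℕ → ℕ) (ρ : Fin n ↪ Fin m) (i : Fin m) (j : Fin n) : Prop :=
  ρ j ≠ i ∧ ¬ ((ρ j : ℕ) < (i : ℕ)) ∧
    (if (j : ℕ) < lam i then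
      (∀ j' : Fin n, ρ j' = i → ¬ (j' < j)) ∧
      (∀ j' : Fin n, ρ j' = i → j < j' → (j' : ℕ) < lam i)
    else
      ∀ j' : Fin n, ρ j' = i → j' < j → (j' : ℕ) < lam i)

/-- `stat ρ` = number of unattacked cells. -/
def statRook (m n : ℕ) (lam : ℕ → ℕ) (ρ : Fin n ↪ Fin m) : ℕ :=
  Set.ncard {p : Fin m × Fin n | Unattacked m n lam ρ p.1 p.2}

/-- The `q`-hit number `H_k^{m,n}(λ)`. -/
def qHit (m n : ℕ) (lam : ℕ → ℕ) (k : ℕ) : F :=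
  ∑ ρ : Fin n ↪ Fin m,
    if Set.ncard {j : Fin n | rookInside m n lam ρ j} = k then qq ^ statRook m n lam ρ else 0

/-- A Dyck word of size `N`. -/
def IsDyck (N : ℕ) (w : List Bool) : Prop :=
  w.count true = N ∧ w.count false = N ∧
    ∀ p : ℕ, (w.take p).count false ≤ (w.take p).count true

/-- Adjacency of the Dyck graph `G(D)` of a Dyck word of size `N` on vertices `Fin N`
(0-indexed: vertex `a` is the vertex `a+1` of `{1,…,N}`). -/
def dyckAdj (N : ℕ) (w : List Bool) (a b : Fin N) : Prop :=
  ((a : ℕ) < b ∧ (b : ℕ) < northBefore w a) ∨ ((b : ℕ) < a ∧ (a : ℕ) < northBefore w b)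

/-- Proper colorings of the Dyck graph `G(w)` with `ν` colors. -/
def properColorings (N ν : ℕ) (w : List Bool) : Set (Fin N → Fin ν) :=
  {κ | ∀ a b : Fin N, dyckAdj N w a b → κ a ≠ κ b}

/-- Number of ascents of a coloring. -/
def ascColor (N ν : ℕ) (w : List Bool) (κ : Fin N → Fin ν) : ℕ :=
  Set.ncard {p : Fin N × Fin N | (p.1 : ℕ) < p.2 ∧ dyckAdj N w p.1 p.2 ∧ κ p.1 < κ p.2}

open scoped Classical in
/-- The chromatic quasisymmetric polynomial `X_{G(w)}(x_1,…,x_ν; q)`. -/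
def chromX (N ν : ℕ) (w : List Bool) : MvPolynomial (Fin ν) F :=
  ∑ κ : Fin N → Fin ν,
    if κ ∈ properColorings N ν w then
      MvPolynomial.C (qq ^ ascColor N ν w κ) * ∏ a : Fin N, MvPolynomial.X (κ a)
    else 0

/-- The staircase word `δ_k = 𝖾^{n-k}(𝗇𝖾)^k𝗇^{m-k}`. -/
def deltaWord (m n k : ℕ) : List Bool :=
  List.replicate (n - k) false ++ (List.replicate k [true, false]).flatten ++
    List.replicate (m - k) true

/-- `m_w`: the largest `k` with `λ(w) ⊆ λ(δ_k)`, i.e. such that the path of `δ_k`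
lies weakly below the path of `w`. -/
def mw (m n : ℕ) (w : List Bool) : ℕ :=
  Finset.sup ((Finset.range (min m n + 1)).filter fun k =>
    ∀ i ∈ Finset.range m, wordLam m w i ≤ wordLam m (deltaWord m n k) i) id

/-- The lattice paths of `w` and `d` share the unit step of `w` corresponding to
the letter at (0-indexed) position `p` of `w`. -/
def StepShared (w d : List Bool) (p : ℕ) : Prop :=
  ∃ p' : ℕ, p' < d.length ∧ d[p']? = w[p]? ∧
    (d.take p').count true = (w.take p).count true ∧
    (d.take p').count false = (w.take p).count false

/-- `w` possesses a critical factor: a factor `𝗇^i𝖾` or `𝗇𝖾^i` with `i ≥ 2`, whose run of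
repeated letters is maximal within `w`, and whose letters contain a unit step shared by
the lattice paths of `w` and of `δ_{m_w}`. -/
def HasCriticalFactor (m n : ℕ) (w : List Bool) : Prop :=
  ∃ (x y : List Bool) (i : ℕ), 2 ≤ i ∧
    ((w = x ++ (List.replicate i true ++ [false]) ++ y ∧ x.getLast? ≠ some true ∧
        ∃ p, x.length ≤ p ∧ p < x.length + i + 1 ∧ StepShared w (deltaWord m n (mw m n w)) p) ∨
      (w = x ++ ([true] ++ List.replicate i false) ++ y ∧ y.head? ≠ some false ∧
        ∃ p, x.length ≤ p ∧ p < x.length + i + 1 ∧ StepShared w (deltaWord m n (mw m n w)) p))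

/-- Evaluation of a (commutative) polynomial in two variables at the commuting elements
`s`, `t` of `𝒫`. -/
def evalST (s t : PathAlg) (P : MvPolynomial (Fin 2) F) : PathAlg :=
  ∑ d ∈ P.support, P.coeff d • (s ^ (d 0) * t ^ (d 1))

/-- The conjugate partition: `conjP m lam i = λ'_i = #{rows r : λ_r ≥ i}` (here `i ≥ 1`,
rows 0-indexed, `lam` supported on `[0, m)`). -/
def conjP (m : ℕ) (lam : ℕ → ℕ) (i : ℕ) : ℕ :=
  ((Finset.range m).filter fun r => i ≤ lam r).card

/-- The sequence `b(λ) = (b_1,…,b_n)` (1-indexed `i`) for `λ ⊆ m × n`, `m ≥ n`. -/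
def bSeq (m : ℕ) (lam : ℕ → ℕ) (i : ℕ) : ℤ :=
  if lam (m - i) < i then (m : ℤ) + 1 - i - conjP m lam i else (i : ℤ) - lam (m - i)

/-- The element `wt_i ∈ 𝒫`. -/
def wt (i : ℤ) : PathAlg :=
  if 1 ≤ i then qint i.toNat • (Pn * Pe) - (qq * qint (i - 1).toNat) • (Pe * Pn)
  else (qq ^ i) • (qint (1 - i).toNat • (Pe * Pn) - qint (-i).toNat • (Pn * Pe))

/-- The defining relations of the `q`-Klyachko algebra. -/
def klyRels : Set (MvPolynomial ℤ F) :=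
  {x | ∃ i : ℤ, x = MvPolynomial.C (1 + qq) * (MvPolynomial.X i * MvPolynomial.X i) -
    (MvPolynomial.C qq * (MvPolynomial.X i * MvPolynomial.X (i - 1)) +
      MvPolynomial.X i * MvPolynomial.X (i + 1))}

/-- The `q`-Klyachko algebra `𝒦`. -/
abbrev Kly : Type := MvPolynomial ℤ F ⧸ Ideal.span klyRels

/-- The generator `u_i` of `𝒦`. -/
def uK (i : ℤ) : Kly := Ideal.Quotient.mk (Ideal.span klyRels) (MvPolynomial.X i)

/-- The element `u(λ) = u_{a_1} ⋯ u_{a_m}` of `𝒦`, where `a(λ)` is the area sequence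
of `λ ⊆ m × m` (here `a_{i+1} = (i+1) - λ_{m-i}` with `lam` 0-indexed). -/
def uLam (m : ℕ) (lam : ℕ → ℕ) : Kly :=
  ∏ i ∈ Finset.range m, uK ((i : ℤ) + 1 - lam (m - 1 - i))

/-- The partition `λ(G(D))` of a Dyck word of size `N`, 0-indexed:
`λ_{i+1} = N - h_{i+1}(D)`. -/
def lamG (N : ℕ) (D : List Bool) : ℕ → ℕ :=
  fun i => if i < N then N - northBefore D i else 0

/-- The number of nonzero parts of `λ(G(D))`. -/
def ellG (N : ℕ) (D : List Bool) : ℕ :=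
  ((Finset.range N).filter fun i => N - northBefore D i ≠ 0).card

/-- The Dyck graph `G(D)` is abelian. -/
def IsAbelian (N : ℕ) (D : List Bool) : Prop := lamG N D 0 + ellG N D ≤ N

/-- `r` is an acyclic orientation of the graph with adjacency `adj` on `Fin N`. -/
def IsAcyclicOrientation (N : ℕ) (adj : Fin N → Fin N → Prop)
    (r : Fin N → Fin N → Bool) : Prop :=
  (∀ a b, r a b = true → adj a b) ∧
  (∀ a b, adj a b → (r a b = true ↔ ¬ r b a = true)) ∧
  (∀ a, ¬ Relation.TransGen (fun u v => r u v = true) a a)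

/-- Number of ascents of an orientation. -/
def ascOrient (N : ℕ) (r : Fin N → Fin N → Bool) : ℕ :=
  Set.ncard {p : Fin N × Fin N | r p.1 p.2 = true ∧ (p.1 : ℕ) < p.2}

/-- Remove from `S` the sources of the orientation restricted to `S`. -/
def peel (N : ℕ) (r : Fin N → Fin N → Bool) (S : Set (Fin N)) : Set (Fin N) :=
  {v ∈ S | ∃ u ∈ S, r u v = true}

/-- Number of sources of the orientation restricted to `S`. -/
def numSources (N : ℕ) (r : Fin N → Fin N → Bool) (S : Set (Fin N)) : ℕ :=
  Set.ncard {v ∈ S | ∀ u ∈ S, ¬ r u v = true}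

open scoped Classical in
/-- `initial(A)`: the number of leading entries of the source sequence equal to `2`. -/
def initialA (N : ℕ) (r : Fin N → Fin N → Bool) : ℕ :=
  Finset.sup ((Finset.range (N + 1)).filter fun j =>
    ∀ k < j, numSources N r ((peel N r)^[k] Set.univ) = 2) id

end

/-!
Read backwards, the entries of `a(λ)` are `m - (j + λⱼ)` over the rows `j < m`, and likewise
for `λᵗ`, so it suffices that the numbers `j + λⱼ` form the same multiset for `λ` and `λᵗ`.
A finite multiset of naturals is determined by the counts `#{x ≥ n}`. For a row `j < n`,
`j + λⱼ ≥ n` says that the cell `(j, n - 1 - j)` of the `n`-th antidiagonal lies in `λ`; so the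
reflection `j ↦ n - 1 - j` followed by transposition matches the rows counted for `λ` with
those counted for `λᵗ`.
-/

theorem Multiset.card_filter_le_eq_count_add {α : Type*} [LinearOrder α] [SuccOrder α]
    [NoMaxOrder α] (s : Multiset α) (c : α) :
    (s.filter (c ≤ ·)).card = s.count c + (s.filter (Order.succ c ≤ ·)).card := by
  have hdisj : s.filter (fun a => c = a ∧ Order.succ c ≤ a) = 0 :=
    Multiset.filter_eq_nil.mpr fun a _ h => (Order.lt_succ c).not_ge (h.1 ▸ h.2)
  rw [Multiset.count_eq_card_filter_eq, ← Multiset.card_add, Multiset.filter_add_filter,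
    hdisj, add_zero]
  congr 1
  refine Multiset.filter_congr fun a _ => ?_
  rw [Order.succ_le_iff]
  exact le_iff_eq_or_lt

theorem Multiset.eq_of_forall_card_filter_le_eq {α : Type*} [LinearOrder α] [SuccOrder α]
    [NoMaxOrder α] {s t : Multiset α}
    (h : ∀ c, (s.filter (c ≤ ·)).card = (t.filter (c ≤ ·)).card) : s = t :=
  Multiset.ext.mpr fun c => by
    have hc := h c
    rw [Multiset.card_filter_le_eq_count_add s, Multiset.card_filter_le_eq_count_add t,
      h (Order.succ c)] at hc
    exact Nat.add_right_cancel hc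

theorem Multiset.map_range_reflect {α : Type*} (f : ℕ → α) (n : ℕ) :
    (Multiset.range n).map (fun j => f (n - 1 - j)) = (Multiset.range n).map f := by
  have h := Finset.sum_range_reflect (fun j => ({f j} : Multiset α)) n
  simp only [Finset.sum_eq_multiset_sum, Finset.range_val] at h
  rw [← Multiset.sum_map_singleton (Multiset.map f _), Multiset.map_map,
    ← Multiset.sum_map_singleton (Multiset.map _ _), Multiset.map_map]
  exact h

section Transpose

open Finset

variable {m : ℕ} {f g : ℕ → ℕ}

theorem reflect_mem_filter_le_add (hf : ∀ i, f i ≤ m) (hfg : ∀ i j, j < f i ↔ i < g j)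
    {n i : ℕ} (hi : i ∈ (range m).filter fun i => n ≤ i + f i) :
    (if n ≤ i then i else n - 1 - i) ∈ (range m).filter fun j => n ≤ j + g j := by
  rw [mem_filter, mem_range] at hi ⊢
  split_ifs with hni
  · exact ⟨hi.1, le_add_right hni⟩
  · have hcell : i < g (n - 1 - i) := (hfg i (n - 1 - i)).mp (by omega)
    exact ⟨by have := hf i; omega, by omega⟩

theorem card_filter_le_add_le (hf : ∀ i, f i ≤ m) (hfg : ∀ i j, j < f i ↔ i < g j) (n : ℕ) :
    #{i ∈ range m | n ≤ i + f i} ≤ #{j ∈ range m | n ≤ j + g j} := by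
  refine card_le_card_of_injOn _ (fun i hi => reflect_mem_filter_le_add hf hfg hi) ?_
  intro i _ j _ hij
  simp only at hij
  split_ifs at hij <;> omega

theorem map_range_add_eq_of_transpose (hf : ∀ i, f i ≤ m) (hg : ∀ j, g j ≤ m)
    (hfg : ∀ i j, j < f i ↔ i < g j) :
    (Multiset.range m).map (fun i => i + f i) = (Multiset.range m).map (fun j => j + g j) := by
  refine Multiset.eq_of_forall_card_filter_le_eq fun n => ?_
  simp only [Multiset.filter_map, Multiset.card_map]
  exact le_antisymm (card_filter_le_add_le hf hfg n)
    (card_filter_le_add_le hg (fun i j => (hfg j i).symm) n)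

end Transpose

theorem conjP_le (m : ℕ) (lam : ℕ → ℕ) (t : ℕ) : conjP m lam t ≤ m :=
  (Finset.card_filter_le _ _).trans (Finset.card_range m).le

theorem lt_conjP_succ_iff {m : ℕ} {lam : ℕ → ℕ} (hanti : Antitone lam)
    (hsupp : ∀ i, m ≤ i → lam i = 0) (i j : ℕ) : i < conjP m lam (j + 1) ↔ j < lam i := by
  unfold conjP
  constructor
  · intro hi
    by_contra! hij
    have hsub : (Finset.range m).filter (fun r => j + 1 ≤ lam r) ⊆ Finset.range i := by
      intro r hr
      rw [Finset.mem_filter] at hr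
      rw [Finset.mem_range]
      by_contra! hir
      have := hanti hir
      omega
    have := Finset.card_le_card hsub
    rw [Finset.card_range] at this
    omega
  · intro hij
    have him : i < m := by
      by_contra! him
      rw [hsupp i him] at hij
      omega
    have hsub : Finset.range (i + 1) ⊆ (Finset.range m).filter (fun r => j + 1 ≤ lam r) := by
      intro r hr
      rw [Finset.mem_range] at hr
      rw [Finset.mem_filter, Finset.mem_range]
      exact ⟨by omega, hij.trans_le (hanti (Nat.lt_succ_iff.mp hr))⟩
    have := Finset.card_le_card hsub
    rw [Finset.card_range] at this
    omega

theorem map_range_area_eq (m : ℕ) (lam : ℕ → ℕ) :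
    (Multiset.range m).map (fun i : ℕ => (i : ℤ) + 1 - lam (m - 1 - i)) =
      ((Multiset.range m).map fun j => j + lam j).map fun x : ℕ => (m : ℤ) - x := by
  rw [← Multiset.map_range_reflect, Multiset.map_map]
  refine Multiset.map_congr rfl fun j hj => ?_
  rw [Multiset.mem_range] at hj
  simp only [Function.comp_apply, Nat.sub_sub_self (Nat.le_sub_one_of_lt hj)]
  push_cast [Nat.sub_sub, Nat.cast_sub (show 1 + j ≤ m by omega)]
  ring

/-- The multisets of entries of `a(λ)` and `a(λᵗ)` coincide. -/
theorem stmt15 (m : ℕ) (lam : ℕ → ℕ) (hlam : IsPartitionIn m m lam) :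
    (Multiset.range m).map (fun i : ℕ => (i : ℤ) + 1 - (lam (m - 1 - i) : ℤ)) =
    (Multiset.range m).map (fun i : ℕ => (i : ℤ) + 1 - (conjP m lam (m - i) : ℤ)) := by
  obtain ⟨hmono, hbound, hsupp⟩ := hlam
  have htranspose : ∀ i j, j < lam i ↔ i < conjP m lam (j + 1) := fun i j =>
    (lt_conjP_succ_iff (fun _ _ h => hmono _ _ h) hsupp i j).symm
  have hconj : (Multiset.range m).map (fun i : ℕ => (i : ℤ) + 1 - (conjP m lam (m - i) : ℤ)) =
      (Multiset.range m).map (fun i : ℕ => (i : ℤ) + 1 - (conjP m lam (m - 1 - i + 1) : ℤ)) :=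
    Multiset.map_congr rfl fun i hi => by
      rw [Multiset.mem_range] at hi
      rw [show m - 1 - i + 1 = m - i by omega]
  rw [hconj, map_range_area_eq m lam, map_range_area_eq m (fun j => conjP m lam (j + 1)),
    map_range_add_eq_of_transpose hbound (fun j => conjP_le m lam (j + 1)) htranspose]
end

section
/- In the q-Klyachko algebra 𝒦, the images of the generators u_0 and u_1 are algebraically independent over ℂ(q); equivalently, the subalgebra of 𝒦 generated by u_0 and u_1 is a polynomial algebra in two variables. -/
/-!
Send `u_i` to `v_i = x + [i]_q (y - x)` in `F[x, y]`, where `[i]_q = (1 - q^i)/(1 - q)` is the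
`q`-number of an integer `i`. The `v_i` satisfy the linear recurrence
`(1 + q) v_i = q v_{i-1} + v_{i+1}`, and multiplying it by `v_i` gives the defining relations of
`𝒦`. Since `v_0 = x` and `v_1 = y` are algebraically independent, so are `u_0` and `u_1`.
-/

open MvPolynomial

section IntQNum

variable {K : Type*} [Field K]

def intQNum (t : K) (i : ℤ) : K := (1 - t ^ i) / (1 - t)

lemma intQNum_zero (t : K) : intQNum t 0 = 0 := by
  simp [intQNum]

lemma intQNum_one {t : K} (ht : t ≠ 1) : intQNum t 1 = 1 := by
  simp [intQNum, div_self (sub_ne_zero.mpr ht.symm)]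

lemma one_add_mul_intQNum {t : K} (ht : t ≠ 0) (i : ℤ) :
    (1 + t) * intQNum t i = t * intQNum t (i - 1) + intQNum t (i + 1) := by
  simp only [intQNum, zpow_sub_one₀ ht, zpow_add_one₀ ht]
  field_simp
  ring

lemma one_add_smul_affine_intQNum {A : Type*} [AddCommGroup A] [Module K A] {t : K} (ht : t ≠ 0)
    (a b : A) (i : ℤ) :
    (1 + t) • (a + intQNum t i • (b - a)) =
      t • (a + intQNum t (i - 1) • (b - a)) + (a + intQNum t (i + 1) • (b - a)) := by
  linear_combination (norm := module) one_add_mul_intQNum ht i • (b - a)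

end IntQNum

lemma qq_ne_zero : qq ≠ 0 := RatFunc.X_ne_zero

lemma qq_ne_one : qq ≠ 1 := fun h => by
  simpa [qq, RatFunc.intDegree_X] using congrArg RatFunc.intDegree h

section KlyLift

variable {A : Type*} [CommRing A] [Algebra F A]

noncomputable def klyLift (v : ℤ → A)
    (hv : ∀ i, (1 + qq) • (v i * v i) = qq • (v i * v (i - 1)) + v i * v (i + 1)) :
    Kly →ₐ[F] A :=
  Ideal.Quotient.liftₐ (Ideal.span klyRels) (aeval v) fun x hx => by
    refine Submodule.span_induction ?_ (map_zero _)
      (fun _ _ _ _ h₁ h₂ => by rw [map_add, h₁, h₂, add_zero])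
      (fun c _ _ h => by rw [smul_eq_mul, map_mul, h, mul_zero]) hx
    rintro _ ⟨i, rfl⟩
    simp only [map_sub, map_add, map_mul, aeval_X, aeval_C, ← Algebra.smul_def]
    rw [← map_add, ← Algebra.smul_def, hv i, sub_self]

@[simp]
lemma klyLift_uK (v : ℤ → A)
    (hv : ∀ i, (1 + qq) • (v i * v i) = qq • (v i * v (i - 1)) + v i * v (i + 1)) (i : ℤ) :
    klyLift v hv (uK i) = v i :=
  aeval_X v i

end KlyLift

/-- `u_0` and `u_1` are algebraically independent in `𝒦`. -/
theorem stmt16 :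
    AlgebraicIndependent F (fun i : Fin 2 => if i = 0 then uK 0 else uK 1) := by
  set v : ℤ → MvPolynomial (Fin 2) F := fun i => X 0 + intQNum qq i • (X 1 - X 0)
  have hrec (i : ℤ) : (1 + qq) • v i = qq • v (i - 1) + v (i + 1) :=
    one_add_smul_affine_intQNum qq_ne_zero _ _ i
  have hv (i : ℤ) : (1 + qq) • (v i * v i) = qq • (v i * v (i - 1)) + v i * v (i + 1) := by
    rw [← smul_mul_assoc, hrec, Algebra.smul_def, Algebra.smul_def]
    ring
  apply AlgebraicIndependent.of_comp (klyLift v hv)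
  convert algebraicIndependent_X (Fin 2) F
  funext i
  fin_cases i <;> simp [v, intQNum_zero, intQNum_one qq_ne_one]
end
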